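/- (Carleman estimate for a first-order operator.) Let Ω ⊂ ℝ³ be a bounded open set with smooth boundary, x₀ ∈ ℝ³∖Ω̄, and let L(x,D)v = Σ_{i=1}^{3} a_i(x)∂_i v + a₀(x)v with a₀ ∈ C(Ω̄), a = (a₁,a₂,a₃) ∈ (C¹(Ω̄))³, ‖a₀‖_{C(Ω̄)} ≤ M, ‖a_i‖_{C¹(Ω̄)} ≤ M for 1 ≤ i ≤ 3, and |a(x)·(x−x₀)| ≥ c₀ > 0 on Ω̄. Set ρ(x) = e^{γ|x−x₀|²} with γ > 0. Then there exist constants τ* > 0 and C > 0 such that τ∫_Ω |v(x)|² e^{2τρ(x)} dx ≤ C∫_Ω |L(x,D)v(x)|² e^{2τρ(x)} dx for all v ∈ H₀¹(Ω) and all τ > τ*. -/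

import Mathlib

/-!
Integrating the divergence of `a v² e^{2τρ}` over an open set on whose boundary `v` vanishes gives
`∫ e^{2τρ} ((4τγρ a·(x - x₀) + div a) v² + 2 v a·∇v) = 0`, using `∇ρ = 2γρ (x - x₀)`.
Where `a·(x - x₀) ≥ c₀`, and since `ρ ≥ 1`, the first term dominates `4τγc₀ ∫ v² e^{2τρ}`, while
the others are bounded by `(5M + 1) ∫ v² e^{2τρ} + ∫ |Lv|² e^{2τρ}`; for `τ > (5M + 1)/(2γc₀)`
this gives the estimate with `C = 1/(2γc₀)`. As `a·(x - x₀)` does not vanish on `Ω̄`, `Ω` is the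
disjoint union of the open parts where it is positive or negative, `v` vanishes on the boundary of
each, and the negative part is the positive part for `(-a, -a₀)`.
-/

noncomputable section

open MeasureTheory Real Set

/-- Spatial points of `ℝ³`. -/
abbrev V3 := Fin 3 → ℝ

/-- Space-time points `z = (t, x)` with `z.1` the time and `z.2` the space variable. -/
abbrev P4 := ℝ × V3

/-- The unit time direction in space-time. -/
def et : P4 := (1, 0)

/-- The `i`-th unit spatial direction in space-time. -/
def ex (i : Fin 3) : P4 := (0, Pi.single i 1)

/-- Directional derivative of a scalar function on space-time. -/
def pd (f : P4 → ℝ) (d : P4) : P4 → ℝ := fun z => fderiv ℝ f z d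

/-- Spatial partial derivative of a scalar function on `ℝ³`. -/
def pdx (c : V3 → ℝ) (i : Fin 3) : V3 → ℝ := fun x => fderiv ℝ c x (Pi.single i 1)

/-- Time derivative `∂ₜ` of a space-time vector field (componentwise). -/
def Dt (u : P4 → V3) : P4 → V3 := fun z i => pd (fun y => u y i) et z

/-- Second time derivative `∂ₜ²` of a scalar function on space-time. -/
def dtt (f : P4 → ℝ) : P4 → ℝ := pd (pd f et) et

/-- Spatial divergence of a space-time vector field. -/
def sdiv (u : P4 → V3) : P4 → ℝ := fun z => ∑ i, pd (fun y => u y i) (ex i) z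

/-- Spatial divergence of a vector field on `ℝ³`. -/
def sdivX (u : V3 → V3) : V3 → ℝ := fun x => ∑ i, pdx (fun y => u y i) i x

/-- Spatial Laplacian of a scalar function on space-time. -/
def slap (f : P4 → ℝ) : P4 → ℝ := fun z => ∑ i, pd (pd f (ex i)) (ex i) z

/-- The elasticity operator `Δ_{μ,λ}v = μΔv + (μ+λ)∇(div v) + (div v)∇λ + (∇v + (∇v)ᵀ)∇μ`. -/
def lameOp (μ lam : V3 → ℝ) (u : P4 → V3) : P4 → V3 := fun z i =>
  μ z.2 * slap (fun y => u y i) z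
    + (μ z.2 + lam z.2) * pd (sdiv u) (ex i) z
    + sdiv u z * pdx lam i z.2
    + ∑ j, (pd (fun y => u y i) (ex j) z + pd (fun y => u y j) (ex i) z) * pdx μ j z.2

/-- Biot's system of poro-elasticity on the space-time set `Q`, with solid displacement `us`,
fluid displacement `uf` and sources `F1, F2`. -/
def BiotSystem (ρ11 ρ12 ρ22 μ lam q r : V3 → ℝ)
    (us uf F1 F2 : P4 → V3) (Q : Set P4) : Prop :=
  ∀ z ∈ Q, ∀ i : Fin 3,
    (ρ11 z.2 * dtt (fun y => us y i) z + ρ12 z.2 * dtt (fun y => uf y i) z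
        - lameOp μ lam us z i - pd (fun y => q y.2 * sdiv uf y) (ex i) z = F1 z i)
    ∧ (ρ12 z.2 * dtt (fun y => us y i) z + ρ22 z.2 * dtt (fun y => uf y i) z
        - pd (fun y => q y.2 * sdiv us y) (ex i) z
        - pd (fun y => r y.2 * sdiv uf y) (ex i) z = F2 z i)

/-- The squared Euclidean distance `|x - x₀|²`. -/
def sqd (x0 x : V3) : ℝ := ∑ i, (x i - x0 i) ^ 2

/-- The Carleman weight `φ(x,t) = exp(γ(|x-x₀|² - βt²))`. -/
def wphi (x0 : V3) (β γ : ℝ) (z : P4) : ℝ := Real.exp (γ * (sqd x0 z.2 - β * z.1 ^ 2))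

/-- The spatial weight `ρ(x) = exp(γ|x-x₀|²)`. -/
def wrho (x0 : V3) (γ : ℝ) (x : V3) : ℝ := Real.exp (γ * sqd x0 x)

/-- The admissible class `𝒞(m,θ)` of coefficients (with lower bound `cstar`). -/
def CClass (Ω : Set V3) (x0 : V3) (m θ cstar : ℝ) (c : V3 → ℝ) : Prop :=
  ContDiff ℝ 2 c ∧ (0 < cstar) ∧ (∀ x ∈ closure Ω, cstar < c x) ∧
    (∀ x ∈ closure Ω,
      |c x| ≤ m ∧ ‖fderiv ℝ c x‖ ≤ m ∧ ‖iteratedFDeriv ℝ 2 c x‖ ≤ m) ∧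
    (∀ x ∈ closure Ω, (∑ i, pdx c i x * (x i - x0 i)) / (2 * c x) ≤ 1 - θ)

/-- Assumption A.1 on the coefficients of Biot's system. -/
def AssumpA1 (Ω : Set V3) (ρ11 ρ12 ρ22 μ lam q r : V3 → ℝ) : Prop :=
  ContDiff ℝ 2 ρ11 ∧ ContDiff ℝ 2 ρ12 ∧ ContDiff ℝ 2 ρ22 ∧ ContDiff ℝ 2 μ ∧
    ContDiff ℝ 2 lam ∧ ContDiff ℝ 2 q ∧ ContDiff ℝ 2 r ∧
    (∀ x ∈ closure Ω, 0 < ρ11 x ∧ 0 < ρ22 x ∧ 0 < q x ∧ 0 < r x ∧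
      0 < μ x ∧ 0 < lam x + μ x) ∧
    (∀ x ∈ closure Ω, 0 < ρ11 x * ρ22 x - ρ12 x ^ 2) ∧
    (∀ x ∈ closure Ω, 0 < lam x * r x - q x ^ 2)

/-- The matrix `A(x)` of (1.9). -/
def Amat (ρ11 ρ12 ρ22 μ lam q r : V3 → ℝ) (x : V3) : Matrix (Fin 2) (Fin 2) ℝ :=
  (ρ11 x * ρ22 x - ρ12 x ^ 2)⁻¹ •
    (Matrix.of ![![ρ22 x, -ρ12 x], ![-ρ12 x, ρ11 x]] *
      Matrix.of ![![2 * μ x + lam x, q x], ![q x, r x]])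

/-- Assumption A.2: `A(x)` has two distinct positive eigenvalues `μ₂(x) ≠ μ₃(x)`, and
`μ₁ = ϱ⁻¹ϱ₂₂μ`, `μ₂`, `μ₃` all belong to the class `𝒞(m,θ)`. -/
def AssumpA2 (Ω : Set V3) (x0 : V3) (ρ11 ρ12 ρ22 μ lam q r μ2 μ3 : V3 → ℝ)
    (m θ c1 c2 c3 : ℝ) : Prop :=
  (∀ x ∈ closure Ω,
      (Amat ρ11 ρ12 ρ22 μ lam q r x - μ2 x • (1 : Matrix (Fin 2) (Fin 2) ℝ)).det = 0 ∧
      (Amat ρ11 ρ12 ρ22 μ lam q r x - μ3 x • (1 : Matrix (Fin 2) (Fin 2) ℝ)).det = 0 ∧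
      0 < μ2 x ∧ 0 < μ3 x ∧ μ2 x ≠ μ3 x) ∧
    CClass Ω x0 m θ c1 (fun x => (ρ11 x * ρ22 x - ρ12 x ^ 2)⁻¹ * ρ22 x * μ x) ∧
    CClass Ω x0 m θ c2 μ2 ∧ CClass Ω x0 m θ c3 μ3

/-- `d² = min_{Ω̄} |x-x₀|²` and `D² = max_{Ω̄} |x-x₀|²`. -/
def dGeom (Ω : Set V3) (x0 : V3) (d D : ℝ) : Prop :=
  0 ≤ d ∧ 0 ≤ D ∧ IsLeast ((fun x => sqd x0 x) '' closure Ω) (d ^ 2) ∧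
    IsGreatest ((fun x => sqd x0 x) '' closure Ω) (D ^ 2)

/-- Condition (1.16) on the parameter `β` (with `D₀ = √(D² - d²)`). -/
def BetaCond (m θ c0 d D β : ℝ) : Prop :=
  0 < β ∧ β + (m * Real.sqrt (D ^ 2 - d ^ 2) / Real.sqrt c0) * Real.sqrt β < θ * c0 ∧
    0 < c0 * d ^ 2 - β * D ^ 2

/-- Squared Euclidean norm of a vector of `ℝ³`. -/
def n2 (v : V3) : ℝ := ∑ i, (v i) ^ 2

/-- Squared space-time gradient `|∇_{x,t} f|²` of a scalar function. -/
def gradT2 (f : P4 → ℝ) (z : P4) : ℝ := (pd f et z) ^ 2 + ∑ j, (pd f (ex j) z) ^ 2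

/-- Squared spatial gradient `|∇f|²` of a scalar function on space-time. -/
def gradX2 (f : P4 → ℝ) (z : P4) : ℝ := ∑ j, (pd f (ex j) z) ^ 2

/-- Squared space-time gradient of a vector field. -/
def vGradT2 (u : P4 → V3) (z : P4) : ℝ := ∑ i, gradT2 (fun y => u y i) z

/-- Squared spatial gradient of a vector field. -/
def vGradX2 (u : P4 → V3) (z : P4) : ℝ := ∑ i, gradX2 (fun y => u y i) z

/-- The weighted Carleman functional appearing on the left-hand side of the Carleman
estimate for Biot's system (also denoted `N_{τ,φ}(v)`). -/
def CarlemanN (x0 : V3) (β γ τ : ℝ) (us uf : P4 → V3) (Q : Set P4) : ℝ :=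
  ∫ z in Q,
    (τ * (vGradT2 us z + gradT2 (sdiv us) z + gradT2 (sdiv uf) z)
      + τ ^ 3 * (n2 (us z) + (sdiv us z) ^ 2 + (sdiv uf z) ^ 2))
      * Real.exp (2 * τ * wphi x0 β γ z)

/-- The weighted source term `∫_Q (|F|² + |∇F|²) e^{2τφ}`. -/
def srcN (x0 : V3) (β γ τ : ℝ) (F1 F2 : P4 → V3) (Q : Set P4) : ℝ :=
  ∫ z in Q,
    (n2 (F1 z) + n2 (F2 z) + vGradX2 F1 z + vGradX2 F2 z)
      * Real.exp (2 * τ * wphi x0 β γ z)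

/-- Squared `H²`-norm of a space-time vector field over a set. -/
def H2sq (w : P4 → V3) (S : Set P4) : ℝ :=
  ∫ z in S, (‖w z‖ ^ 2 + ‖fderiv ℝ w z‖ ^ 2 + ‖iteratedFDeriv ℝ 2 w z‖ ^ 2)

/-- The observation quantity `E_ω(u) = Σ_{j=2}^3 ‖∂ₜʲu‖²_{H²(ω×(-T,T))}`. -/
def Eobs (us uf : P4 → V3) (S : Set P4) : ℝ :=
  H2sq (Dt (Dt us)) S + H2sq (Dt (Dt uf)) S
    + H2sq (Dt (Dt (Dt us))) S + H2sq (Dt (Dt (Dt uf))) S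

/-- Squared `H₀¹(Ω)`-norm of a scalar function. -/
def H01sq (Ω : Set V3) (p : V3 → ℝ) : ℝ :=
  ∫ x in Ω, ((p x) ^ 2 + ∑ i, (pdx p i x) ^ 2)

theorem Continuous.integrableOn_of_isBounded {X G : Type*} [MetricSpace X] [ProperSpace X]
    [MeasurableSpace X] [OpensMeasurableSpace X] {μ : Measure X} [IsFiniteMeasureOnCompacts μ]
    [NormedAddCommGroup G] {f : X → G} (hf : Continuous f) {s : Set X}
    (hs : Bornology.IsBounded s) : IntegrableOn f s μ :=
  (hf.continuousOn.integrableOn_compact hs.isCompact_closure).mono_set subset_closure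

section Calculus

variable {E F : Type*} [NormedAddCommGroup E] [NormedSpace ℝ E]
  [NormedAddCommGroup F] [NormedSpace ℝ F]

theorem hasFDerivAt_indicator_of_frontier {S : Set E} (hS : IsOpen S) {f : E → F}
    {f' : E → E →L[ℝ] F} (hf : ∀ x, HasFDerivAt f (f' x) x)
    (h0 : ∀ x ∈ frontier S, f x = 0 ∧ f' x = 0) (x : E) :
    HasFDerivAt (S.indicator f) (S.indicator f' x) x := by
  by_cases hxS : x ∈ S
  · rw [indicator_of_mem hxS]
    refine (hf x).congr_of_eventuallyEq ?_
    filter_upwards [hS.mem_nhds hxS] with y hy using indicator_of_mem hy f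
  by_cases hxcl : x ∈ closure S
  · obtain ⟨hfx, hf'x⟩ := h0 x ⟨hxcl, by rwa [hS.interior_eq]⟩
    rw [indicator_of_notMem hxS, hasFDerivAt_iff_isLittleO_nhds_zero]
    have hfo := hasFDerivAt_iff_isLittleO_nhds_zero.1 (hf x)
    simp only [hfx, hf'x, indicator_of_notMem hxS, sub_zero, zero_apply] at hfo ⊢
    exact (Asymptotics.isBigO_of_le _ fun h => norm_indicator_le_norm_self f _).trans_isLittleO hfo
  · rw [indicator_of_notMem hxS]
    refine (hasFDerivAt_const 0 x).congr_of_eventuallyEq ?_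
    filter_upwards [isClosed_closure.isOpen_compl.mem_nhds hxcl] with y hy
    exact indicator_of_notMem (fun h => hy (subset_closure h)) f

variable [MeasurableSpace E] [BorelSpace E] [FiniteDimensional ℝ E] {μ : Measure E}
  [μ.IsAddHaarMeasure]

theorem integral_hasFDerivAt_apply_eq_zero [CompleteSpace F] {g : E → F}
    {g' : E → E →L[ℝ] F} {v : E} (hg : ∀ x, HasFDerivAt g (g' x) x)
    (hg'int : Integrable (fun x => g' x v) μ) (hgint : Integrable g μ) :
    ∫ x, g' x v ∂μ = 0 := by
  have := integral_bilinear_hasFDerivAt_right_eq_neg_left_of_integrable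
    (f := fun _ : E => (1 : ℝ)) (f' := fun _ => 0) (v := v)
    (B := ContinuousLinearMap.lsmul ℝ ℝ) (μ := μ) (by simp) (by simpa using hg'int)
    (by simpa using hgint) (fun x _ => hasFDerivAt_const 1 x) (fun x _ => hg x)
  simpa using this

theorem setIntegral_fderiv_apply_eq_zero_of_frontier {S : Set E} (hS : IsOpen S)
    (hSb : Bornology.IsBounded S) {f : E → ℝ} (hf : ContDiff ℝ 1 f)
    (h0 : ∀ x ∈ frontier S, f x = 0 ∧ fderiv ℝ f x = 0) (v : E) :
    ∫ x in S, fderiv ℝ f x v ∂μ = 0 := by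
  have hdiff : ∀ x, HasFDerivAt f (fderiv ℝ f x) x :=
    fun x => (hf.differentiable one_ne_zero x).hasFDerivAt
  have happly : (fun x => S.indicator (fderiv ℝ f) x v) = S.indicator (fun x => fderiv ℝ f x v) :=
    (indicator_comp_of_zero (g := fun L : E →L[ℝ] ℝ => L v) rfl).symm
  rw [← integral_indicator hS.measurableSet, ← happly]
  refine integral_hasFDerivAt_apply_eq_zero (hasFDerivAt_indicator_of_frontier hS hdiff h0) ?_ ?_
  · rw [happly, integrable_indicator_iff hS.measurableSet]
    exact ((hf.continuous_fderiv one_ne_zero).clm_apply continuous_const).integrableOn_of_isBounded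
      hSb
  · rw [integrable_indicator_iff hS.measurableSet]
    exact hf.continuous.integrableOn_of_isBounded hSb

end Calculus

theorem pdx_mul {f g : V3 → ℝ} {x : V3} (hf : DifferentiableAt ℝ f x)
    (hg : DifferentiableAt ℝ g x) (i : Fin 3) :
    pdx (fun y => f y * g y) i x = pdx f i x * g x + f x * pdx g i x := by
  simp only [pdx, fderiv_fun_mul hf hg, add_apply, smul_apply, smul_eq_mul]
  ring

theorem continuous_pdx {f : V3 → ℝ} (hf : ContDiff ℝ 1 f) (i : Fin 3) : Continuous (pdx f i) :=
  (hf.continuous_fderiv one_ne_zero).clm_apply continuous_const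

theorem abs_pdx_le_norm_fderiv (f : V3 → ℝ) (i : Fin 3) (x : V3) :
    |pdx f i x| ≤ ‖fderiv ℝ f x‖ := by
  simpa [pdx, Pi.norm_single] using (fderiv ℝ f x).le_opNorm (Pi.single i 1)

theorem contDiff_sqd (x0 : V3) : ContDiff ℝ ⊤ (sqd x0) := by
  unfold sqd
  fun_prop

theorem pdx_sqd (x0 x : V3) (i : Fin 3) : pdx (sqd x0) i x = 2 * (x i - x0 i) := by
  have h : ∀ j : Fin 3, HasFDerivAt (fun y : V3 => (y j - x0 j) ^ 2)
      ((2 * (x j - x0 j)) • ContinuousLinearMap.proj (R := ℝ) (φ := fun _ : Fin 3 => ℝ) j) x := by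
    intro j
    simpa using ((hasFDerivAt_apply j x).sub_const (x0 j)).pow 2
  change fderiv ℝ (fun y : V3 => ∑ j, (y j - x0 j) ^ 2) x _ = _
  rw [(HasFDerivAt.fun_sum (u := Finset.univ) fun j _ => h j).fderiv]
  simp [Pi.single_apply]

theorem pdx_exp {f : V3 → ℝ} {x : V3} (hf : DifferentiableAt ℝ f x) (i : Fin 3) :
    pdx (fun y => exp (f y)) i x = exp (f x) * pdx f i x := by
  simp [pdx, fderiv_exp hf]

theorem pdx_const_mul {f : V3 → ℝ} {x : V3} (hf : DifferentiableAt ℝ f x) (c : ℝ) (i : Fin 3) :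
    pdx (fun y => c * f y) i x = c * pdx f i x := by
  simp [pdx, fderiv_const_mul hf]

theorem contDiff_wrho (x0 : V3) (γ : ℝ) : ContDiff ℝ ⊤ (wrho x0 γ) :=
  ((contDiff_sqd x0).const_smul γ).exp

theorem pdx_wrho (x0 : V3) (γ : ℝ) (x : V3) (i : Fin 3) :
    pdx (wrho x0 γ) i x = 2 * γ * (x i - x0 i) * wrho x0 γ x := by
  have hd : DifferentiableAt ℝ (sqd x0) x := (contDiff_sqd x0).differentiable (by simp) x
  change pdx (fun y => exp (γ * sqd x0 y)) i x = _
  rw [pdx_exp (hd.const_mul γ), pdx_const_mul hd, pdx_sqd, wrho]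
  ring

theorem pdx_exp_two_mul_wrho (x0 : V3) (γ τ : ℝ) (x : V3) (i : Fin 3) :
    pdx (fun y => exp (2 * τ * wrho x0 γ y)) i x =
      4 * τ * γ * wrho x0 γ x * (x i - x0 i) * exp (2 * τ * wrho x0 γ x) := by
  have hd : DifferentiableAt ℝ (wrho x0 γ) x := (contDiff_wrho x0 γ).differentiable (by simp) x
  rw [pdx_exp (hd.const_mul _), pdx_const_mul hd, pdx_wrho]
  ring

theorem setIntegral_sq_div_add_two_mul_grad_eq_zero {S : Set V3} (hS : IsOpen S)
    (hSb : Bornology.IsBounded S) {b : Fin 3 → V3 → ℝ} (hb : ∀ i, ContDiff ℝ 1 (b i))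
    {v : V3 → ℝ} (hv : ContDiff ℝ 1 v) (hv0 : ∀ x ∈ frontier S, v x = 0) :
    ∫ x in S, (v x ^ 2 * ∑ i, pdx (b i) i x + 2 * v x * ∑ i, b i x * pdx v i x) = 0 := by
  set f : Fin 3 → V3 → ℝ := fun i y => b i y * v y ^ 2
  have hf : ∀ i, ContDiff ℝ 1 (f i) := fun i => (hb i).mul (hv.pow 2)
  have hderiv : ∀ i x, HasFDerivAt (f i) (b i x • ((2 * v x) • fderiv ℝ v x)
      + v x ^ 2 • fderiv ℝ (b i) x) x := fun i x => by
    simpa using ((hb i).differentiable one_ne_zero x).hasFDerivAt.fun_mul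
      ((hv.differentiable one_ne_zero x).hasFDerivAt.pow 2)
  have hpdx : ∀ i x, pdx (f i) i x = pdx (b i) i x * v x ^ 2 + b i x * (2 * v x * pdx v i x) :=
    fun i x => by simp [pdx, (hderiv i x).fderiv]; ring
  have hint : ∀ i, IntegrableOn (pdx (f i) i) S :=
    fun i => (continuous_pdx (hf i) i).integrableOn_of_isBounded hSb
  calc ∫ x in S, (v x ^ 2 * ∑ i, pdx (b i) i x + 2 * v x * ∑ i, b i x * pdx v i x)
      = ∫ x in S, ∑ i, pdx (f i) i x := by
        congr 1; funext x
        simp only [hpdx, Finset.sum_add_distrib, Finset.mul_sum]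
        ring_nf
    _ = ∑ i, ∫ x in S, pdx (f i) i x := integral_finsetSum _ fun i _ => hint i
    _ = 0 := Finset.sum_eq_zero fun i _ =>
        setIntegral_fderiv_apply_eq_zero_of_frontier hS hSb (hf i) (fun x hx => by
          simp [f, (hderiv i x).fderiv, hv0 x hx]) _

theorem setIntegral_carleman_identity {S : Set V3} (hS : IsOpen S) (hSb : Bornology.IsBounded S)
    {a : Fin 3 → V3 → ℝ} (ha : ∀ i, ContDiff ℝ 1 (a i)) {v : V3 → ℝ} (hv : ContDiff ℝ 1 v)
    (hv0 : ∀ x ∈ frontier S, v x = 0) (x0 : V3) (γ τ : ℝ) :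
    ∫ x in S, exp (2 * τ * wrho x0 γ x) *
      (v x ^ 2 * (4 * τ * γ * wrho x0 γ x * ∑ i, a i x * (x i - x0 i) + ∑ i, pdx (a i) i x)
        + 2 * v x * ∑ i, a i x * pdx v i x) = 0 := by
  have hE : ContDiff ℝ 1 fun y => exp (2 * τ * wrho x0 γ y) :=
    ((contDiff_wrho x0 γ).const_smul (2 * τ)).exp.of_le le_top
  have hpdx : ∀ i x, pdx (fun y => a i y * exp (2 * τ * wrho x0 γ y)) i x =
      exp (2 * τ * wrho x0 γ x) *
        (pdx (a i) i x + 4 * τ * γ * wrho x0 γ x * (a i x * (x i - x0 i))) :=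
    fun i x => by
      rw [pdx_mul ((ha i).differentiable one_ne_zero x) (hE.differentiable one_ne_zero x),
        pdx_exp_two_mul_wrho]
      ring
  rw [← setIntegral_sq_div_add_two_mul_grad_eq_zero hS hSb (fun i => (ha i).mul hE) hv hv0]
  congr 1; funext x
  simp only [hpdx, Fin.sum_univ_three]
  ring

theorem carleman_pointwise_bound {v A c d w s E M c0 : ℝ} (hc : |c| ≤ M) (hd : |d| ≤ 3 * M)
    (hw : c0 ≤ w) (hs : 0 ≤ s) (hE : 0 ≤ E) :
    s * c0 * (v ^ 2 * E) ≤
      E * (v ^ 2 * (s * w + d) + 2 * v * A) +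
        ((5 * M + 1) * (v ^ 2 * E) + (A + c * v) ^ 2 * E) := by
  have hweight : s * c0 * v ^ 2 ≤ v ^ 2 * (s * w) := by
    nlinarith [mul_le_mul_of_nonneg_left hw (mul_nonneg hs (sq_nonneg v))]
  -- `(A + c v)² + 2 v A + v² = (A + c v + v)² - 2 c v²`, and `c ≤ M`, `d ≥ -3M`
  have hlower : 0 ≤ v ^ 2 * d + 2 * v * A + (5 * M + 1) * v ^ 2 + (A + c * v) ^ 2 := by
    nlinarith [sq_nonneg (A + c * v + v), mul_nonneg (sq_nonneg v) (sub_nonneg.2 (abs_le.1 hc).2),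
      mul_nonneg (sq_nonneg v) (neg_le_iff_add_nonneg.1 (abs_le.1 hd).1)]
  nlinarith [mul_nonneg hE (sub_nonneg.2 hweight), mul_nonneg hE hlower]

theorem abs_sum_pdx_le {a : Fin 3 → V3 → ℝ} {x : V3} {M : ℝ}
    (haM : ∀ i, ‖fderiv ℝ (a i) x‖ ≤ M) : |∑ i, pdx (a i) i x| ≤ 3 * M :=
  calc |∑ i, pdx (a i) i x| ≤ ∑ i, |pdx (a i) i x| := Finset.abs_sum_le_sum_abs _ _
    _ ≤ ∑ _i : Fin 3, M :=
        Finset.sum_le_sum fun i _ => (abs_pdx_le_norm_fderiv _ _ _).trans (haM i)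
    _ = 3 * M := by simp

theorem carleman_energy_le {S : Set V3} (hS : IsOpen S) (hSb : Bornology.IsBounded S)
    {x0 : V3} {γ M c0 τ : ℝ} {a : Fin 3 → V3 → ℝ} {a0 : V3 → ℝ} (hγ : 0 ≤ γ) (hc0 : 0 ≤ c0)
    (hτ : 0 ≤ τ) (ha : ∀ i, ContDiff ℝ 1 (a i)) (ha0 : Continuous a0)
    (ha0M : ∀ x ∈ S, |a0 x| ≤ M) (haM : ∀ i, ∀ x ∈ S, ‖fderiv ℝ (a i) x‖ ≤ M)
    (hnc : ∀ x ∈ S, c0 ≤ ∑ i, a i x * (x i - x0 i)) {v : V3 → ℝ} (hv : ContDiff ℝ 1 v)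
    (hv0 : ∀ x ∈ frontier S, v x = 0) :
    4 * τ * γ * c0 * ∫ x in S, v x ^ 2 * exp (2 * τ * wrho x0 γ x) ≤
      (5 * M + 1) * (∫ x in S, v x ^ 2 * exp (2 * τ * wrho x0 γ x)) + ∫ x in S,
        (∑ i, a i x * pdx v i x + a0 x * v x) ^ 2 * exp (2 * τ * wrho x0 γ x) := by
  have hwc : Continuous (wrho x0 γ) := (contDiff_wrho x0 γ).continuous
  have hac := fun i => (ha i).continuous
  have hdac := fun i => continuous_pdx (ha i) i
  have hdvc := continuous_pdx hv
  have hvc := hv.continuous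
  have hint : IntegrableOn (fun x => exp (2 * τ * wrho x0 γ x) *
      (v x ^ 2 * (4 * τ * γ * wrho x0 γ x * ∑ i, a i x * (x i - x0 i) + ∑ i, pdx (a i) i x)
        + 2 * v x * ∑ i, a i x * pdx v i x)) S :=
    Continuous.integrableOn_of_isBounded (by fun_prop) hSb
  have hintI : IntegrableOn (fun x => v x ^ 2 * exp (2 * τ * wrho x0 γ x)) S :=
    Continuous.integrableOn_of_isBounded (by fun_prop) hSb
  have hintJ : IntegrableOn (fun x => (∑ i, a i x * pdx v i x + a0 x * v x) ^ 2 *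
      exp (2 * τ * wrho x0 γ x)) S :=
    Continuous.integrableOn_of_isBounded (by fun_prop) hSb
  calc 4 * τ * γ * c0 * ∫ x in S, v x ^ 2 * exp (2 * τ * wrho x0 γ x)
      = ∫ x in S, 4 * τ * γ * c0 * (v x ^ 2 * exp (2 * τ * wrho x0 γ x)) :=
        (integral_const_mul _ _).symm
    _ ≤ ∫ x in S, (exp (2 * τ * wrho x0 γ x) *
          (v x ^ 2 * (4 * τ * γ * wrho x0 γ x * ∑ i, a i x * (x i - x0 i) + ∑ i, pdx (a i) i x)
            + 2 * v x * ∑ i, a i x * pdx v i x)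
          + ((5 * M + 1) * (v x ^ 2 * exp (2 * τ * wrho x0 γ x)) +
            (∑ i, a i x * pdx v i x + a0 x * v x) ^ 2 * exp (2 * τ * wrho x0 γ x))) := by
      refine setIntegral_mono_on (hintI.const_mul _)
        (hint.fun_add (hintI.const_mul _ |>.fun_add hintJ)) hS.measurableSet fun x hx => ?_
      have hρ : 1 ≤ wrho x0 γ x :=
        one_le_exp (mul_nonneg hγ (Finset.sum_nonneg fun i _ => sq_nonneg _))
      have hw : c0 ≤ wrho x0 γ x * ∑ i, a i x * (x i - x0 i) := by nlinarith [hnc x hx]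
      have := carleman_pointwise_bound (v := v x) (A := ∑ i, a i x * pdx v i x)
        (s := 4 * τ * γ) (E := exp (2 * τ * wrho x0 γ x)) (ha0M x hx)
        (abs_sum_pdx_le fun i => haM i x hx) hw (by positivity) (by positivity)
      linarith
    _ = _ := by
      rw [integral_add hint (hintI.const_mul _ |>.fun_add hintJ),
        integral_add (hintI.const_mul _) hintJ, integral_const_mul,
        setIntegral_carleman_identity hS hSb ha hv hv0, zero_add]

theorem carleman_of_noncharacteristic_pos {S : Set V3} (hS : IsOpen S)
    (hSb : Bornology.IsBounded S) {x0 : V3} {γ M c0 τ : ℝ} {a : Fin 3 → V3 → ℝ} {a0 : V3 → ℝ}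
    (hγ : 0 < γ) (hc0 : 0 < c0) (hM : 0 ≤ M) (ha : ∀ i, ContDiff ℝ 1 (a i)) (ha0 : Continuous a0)
    (ha0M : ∀ x ∈ S, |a0 x| ≤ M) (haM : ∀ i, ∀ x ∈ S, ‖fderiv ℝ (a i) x‖ ≤ M)
    (hnc : ∀ x ∈ S, c0 ≤ ∑ i, a i x * (x i - x0 i)) {v : V3 → ℝ} (hv : ContDiff ℝ 1 v)
    (hv0 : ∀ x ∈ frontier S, v x = 0) (hτ : (5 * M + 1) / (2 * γ * c0) < τ) :
    τ * ∫ x in S, v x ^ 2 * exp (2 * τ * wrho x0 γ x) ≤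
      1 / (2 * γ * c0) * ∫ x in S,
        (∑ i, a i x * pdx v i x + a0 x * v x) ^ 2 * exp (2 * τ * wrho x0 γ x) := by
  have hτ0 : 0 < τ := lt_of_le_of_lt (by positivity) hτ
  have henergy := carleman_energy_le hS hSb hγ.le hc0.le hτ0.le ha ha0 ha0M haM hnc hv hv0
  have hI : 0 ≤ ∫ x in S, v x ^ 2 * exp (2 * τ * wrho x0 γ x) :=
    setIntegral_nonneg hS.measurableSet fun x _ => by positivity
  have hMτ : 5 * M + 1 ≤ 2 * γ * c0 * τ := by
    rw [div_lt_iff₀ (by positivity)] at hτ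
    linarith
  rw [one_div_mul_eq_div, le_div_iff₀ (by positivity)]
  nlinarith [mul_le_mul_of_nonneg_right hMτ hI]

theorem frontier_inter_subset_of_inter_closure_subset {X : Type*} [TopologicalSpace X]
    {Ω U : Set X} (hΩ : IsOpen Ω) (hU : IsOpen U) (h : Ω ∩ closure U ⊆ U) :
    frontier (Ω ∩ U) ⊆ frontier Ω := by
  intro x hx
  rcases frontier_inter_subset Ω U hx with ⟨hxΩ, -⟩ | ⟨hxcl, hxU⟩
  · exact hxΩ
  · rw [hU.frontier_eq] at hxU
    refine ⟨hxcl, fun hxΩ => hxU.2 (h ⟨?_, hxU.1⟩)⟩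
    rwa [hΩ.interior_eq] at hxΩ

theorem carleman_on_inter_pos {Ω : Set V3} (hΩ : IsOpen Ω) (hΩb : Bornology.IsBounded Ω)
    {x0 : V3} {γ M c0 τ : ℝ} {a : Fin 3 → V3 → ℝ} {a0 : V3 → ℝ} (hγ : 0 < γ) (hc0 : 0 < c0)
    (hM : 0 ≤ M) (ha : ∀ i, ContDiff ℝ 1 (a i)) (ha0 : Continuous a0)
    (ha0M : ∀ x ∈ Ω, |a0 x| ≤ M) (haM : ∀ i, ∀ x ∈ Ω, ‖fderiv ℝ (a i) x‖ ≤ M)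
    (hnc : ∀ x ∈ Ω, c0 ≤ |∑ i, a i x * (x i - x0 i)|) {v : V3 → ℝ} (hv : ContDiff ℝ 1 v)
    (hv0 : ∀ x ∈ frontier Ω, v x = 0) (hτ : (5 * M + 1) / (2 * γ * c0) < τ) :
    τ * ∫ x in Ω ∩ {x | 0 < ∑ i, a i x * (x i - x0 i)}, v x ^ 2 * exp (2 * τ * wrho x0 γ x) ≤
      1 / (2 * γ * c0) * ∫ x in Ω ∩ {x | 0 < ∑ i, a i x * (x i - x0 i)},
        (∑ i, a i x * pdx v i x + a0 x * v x) ^ 2 * exp (2 * τ * wrho x0 γ x) := by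
  have hac := fun i => (ha i).continuous
  have hg : Continuous fun x : V3 => ∑ i, a i x * (x i - x0 i) := by fun_prop
  have hU : IsOpen {x : V3 | 0 < ∑ i, a i x * (x i - x0 i)} := isOpen_lt continuous_const hg
  have hcl : Ω ∩ closure {x : V3 | 0 < ∑ i, a i x * (x i - x0 i)} ⊆
      {x | 0 < ∑ i, a i x * (x i - x0 i)} := fun x ⟨hxΩ, hx⟩ => by
    have hnonneg : 0 ≤ ∑ i, a i x * (x i - x0 i) := closure_lt_subset_le continuous_const hg hx
    exact hc0.trans_le (abs_of_nonneg hnonneg ▸ hnc x hxΩ)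
  refine carleman_of_noncharacteristic_pos (hΩ.inter hU) (hΩb.subset inter_subset_left) hγ hc0 hM
    ha ha0 (fun x hx => ha0M x hx.1) (fun i x hx => haM i x hx.1) (fun x hx => ?_) hv
    (fun x hx => hv0 x (frontier_inter_subset_of_inter_closure_subset hΩ hU hcl hx)) hτ
  have hpos : 0 < ∑ i, a i x * (x i - x0 i) := hx.2
  exact abs_of_pos hpos ▸ hnc x hx.1

theorem carleman_on_inter_neg {Ω : Set V3} (hΩ : IsOpen Ω) (hΩb : Bornology.IsBounded Ω)
    {x0 : V3} {γ M c0 τ : ℝ} {a : Fin 3 → V3 → ℝ} {a0 : V3 → ℝ} (hγ : 0 < γ) (hc0 : 0 < c0)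
    (hM : 0 ≤ M) (ha : ∀ i, ContDiff ℝ 1 (a i)) (ha0 : Continuous a0)
    (ha0M : ∀ x ∈ Ω, |a0 x| ≤ M) (haM : ∀ i, ∀ x ∈ Ω, ‖fderiv ℝ (a i) x‖ ≤ M)
    (hnc : ∀ x ∈ Ω, c0 ≤ |∑ i, a i x * (x i - x0 i)|) {v : V3 → ℝ} (hv : ContDiff ℝ 1 v)
    (hv0 : ∀ x ∈ frontier Ω, v x = 0) (hτ : (5 * M + 1) / (2 * γ * c0) < τ) :
    τ * ∫ x in Ω ∩ {x | ∑ i, a i x * (x i - x0 i) < 0}, v x ^ 2 * exp (2 * τ * wrho x0 γ x) ≤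
      1 / (2 * γ * c0) * ∫ x in Ω ∩ {x | ∑ i, a i x * (x i - x0 i) < 0},
        (∑ i, a i x * pdx v i x + a0 x * v x) ^ 2 * exp (2 * τ * wrho x0 γ x) := by
  have := carleman_on_inter_pos (a := fun i y => -a i y) (a0 := fun y => -a0 y) hΩ hΩb hγ hc0 hM
    (fun i => (ha i).neg) ha0.neg (by simpa using ha0M) (by simpa [fderiv_fun_neg] using haM)
    (by simpa [Finset.sum_neg_distrib] using hnc) hv hv0 hτ
  have hset : {x : V3 | 0 < ∑ i, -a i x * (x i - x0 i)} = {x | ∑ i, a i x * (x i - x0 i) < 0} := by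
    ext x
    simp [Finset.sum_neg_distrib]
  have hL : ∀ x, (∑ i, -a i x * pdx v i x + -a0 x * v x) ^ 2 =
      (∑ i, a i x * pdx v i x + a0 x * v x) ^ 2 := fun x => by
    rw [← neg_sq]
    simp [Finset.sum_neg_distrib]
    ring
  simpa only [hset, hL] using this

theorem setIntegral_eq_add_of_ne_zero {X : Type*} [MeasurableSpace X] {μ : Measure X}
    {Ω : Set X} {f g : X → ℝ} (hΩ : MeasurableSet Ω) (hg : Measurable g)
    (hg0 : ∀ x ∈ Ω, g x ≠ 0) (hf : IntegrableOn f Ω μ) :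
    ∫ x in Ω, f x ∂μ = ∫ x in Ω ∩ {x | 0 < g x}, f x ∂μ + ∫ x in Ω ∩ {x | g x < 0}, f x ∂μ := by
  have hsplit : Ω = Ω ∩ {x | 0 < g x} ∪ Ω ∩ {x | g x < 0} := by
    ext x
    constructor
    · intro hx
      rcases (hg0 x hx).lt_or_gt with h | h
      · exact Or.inr ⟨hx, h⟩
      · exact Or.inl ⟨hx, h⟩
    · rintro (⟨hx, -⟩ | ⟨hx, -⟩) <;> exact hx
  have hdisj : Disjoint (Ω ∩ {x | 0 < g x}) (Ω ∩ {x | g x < 0}) :=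
    disjoint_left.2 fun x ⟨_, (hpos : 0 < g x)⟩ ⟨_, (hneg : g x < 0)⟩ => (hpos.trans hneg).false
  conv_lhs => rw [hsplit]
  exact setIntegral_union hdisj (hΩ.inter (measurableSet_lt hg measurable_const))
    (hf.mono_set inter_subset_left) (hf.mono_set inter_subset_left)

theorem firstorder_carleman_general (Ω : Set V3) (x0 : V3) (γ M c0 : ℝ)
    (a : Fin 3 → V3 → ℝ) (a0 : V3 → ℝ)
    (hΩopen : IsOpen Ω) (hΩbd : Bornology.IsBounded Ω)
    (hγ : 0 < γ) (ha0cont : Continuous a0) (hacont : ∀ i, ContDiff ℝ 1 (a i))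
    (ha0M : ∀ x ∈ closure Ω, |a0 x| ≤ M)
    (haM : ∀ i, ∀ x ∈ closure Ω, |a i x| ≤ M ∧ ‖fderiv ℝ (a i) x‖ ≤ M)
    (hc0 : 0 < c0)
    (hnc : ∀ x ∈ closure Ω, c0 ≤ |∑ i, a i x * (x i - x0 i)|) :
    ∃ τs : ℝ, 0 < τs ∧ ∃ C : ℝ, 0 < C ∧
      ∀ v : V3 → ℝ, ContDiff ℝ 1 v → (∀ x ∈ frontier Ω, v x = 0) →
        ∀ τ : ℝ, τs < τ →
          τ * ∫ x in Ω, (v x) ^ 2 * Real.exp (2 * τ * wrho x0 γ x) ≤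
            C * ∫ x in Ω,
              (∑ i, a i x * pdx v i x + a0 x * v x) ^ 2 * Real.exp (2 * τ * wrho x0 γ x) := by
  refine ⟨(5 * |M| + 1) / (2 * γ * c0), by positivity, 1 / (2 * γ * c0), by positivity,
    fun v hv hv0 τ hτ => ?_⟩
  have ha0M' : ∀ x ∈ Ω, |a0 x| ≤ |M| :=
    fun x hx => (ha0M x (subset_closure hx)).trans (le_abs_self M)
  have haM' : ∀ i, ∀ x ∈ Ω, ‖fderiv ℝ (a i) x‖ ≤ |M| :=
    fun i x hx => (haM i x (subset_closure hx)).2.trans (le_abs_self M)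
  have hnc' : ∀ x ∈ Ω, c0 ≤ |∑ i, a i x * (x i - x0 i)| := fun x hx => hnc x (subset_closure hx)
  have hpos := carleman_on_inter_pos hΩopen hΩbd hγ hc0 (abs_nonneg M) hacont ha0cont ha0M' haM'
    hnc' hv hv0 hτ
  have hneg := carleman_on_inter_neg hΩopen hΩbd hγ hc0 (abs_nonneg M) hacont ha0cont ha0M' haM'
    hnc' hv hv0 hτ
  have hac := fun i => (hacont i).continuous
  have hdvc := continuous_pdx hv
  have hwc := (contDiff_wrho x0 γ).continuous
  have hvc := hv.continuous
  have hg : Measurable fun x : V3 => ∑ i, a i x * (x i - x0 i) := by fun_prop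
  have hg0 : ∀ x ∈ Ω, ∑ i, a i x * (x i - x0 i) ≠ 0 := fun x hx h0 => by
    have := hnc' x hx
    rw [h0, abs_zero] at this
    linarith
  rw [setIntegral_eq_add_of_ne_zero hΩopen.measurableSet hg hg0
      (Continuous.integrableOn_of_isBounded (by fun_prop) hΩbd),
    setIntegral_eq_add_of_ne_zero hΩopen.measurableSet hg hg0
      (Continuous.integrableOn_of_isBounded (by fun_prop) hΩbd)]
  linarith

/-- Carleman estimate for the first-order operator
`L(x,D)v = Σᵢ aᵢ∂ᵢv + a₀v` with non-characteristic condition `|a(x)·(x-x₀)| ≥ c₀ > 0`,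
with weight `ρ(x) = e^{γ|x-x₀|²}`, for functions `v ∈ H₀¹(Ω)`. -/
theorem firstorder_carleman (Ω : Set V3) (x0 : V3) (γ M c0 : ℝ)
    (a : Fin 3 → V3 → ℝ) (a0 : V3 → ℝ)
    (hΩopen : IsOpen Ω) (hΩbd : Bornology.IsBounded Ω) (hx0 : x0 ∉ closure Ω)
    (hγ : 0 < γ) (ha0cont : Continuous a0) (hacont : ∀ i, ContDiff ℝ 1 (a i))
    (ha0M : ∀ x ∈ closure Ω, |a0 x| ≤ M)
    (haM : ∀ i, ∀ x ∈ closure Ω, |a i x| ≤ M ∧ ‖fderiv ℝ (a i) x‖ ≤ M)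
    (hc0 : 0 < c0)
    (hnc : ∀ x ∈ closure Ω, c0 ≤ |∑ i, a i x * (x i - x0 i)|) :
    ∃ τs : ℝ, 0 < τs ∧ ∃ C : ℝ, 0 < C ∧
      ∀ v : V3 → ℝ, ContDiff ℝ 1 v → (∀ x ∈ frontier Ω, v x = 0) →
        ∀ τ : ℝ, τs < τ →
          τ * ∫ x in Ω, (v x) ^ 2 * Real.exp (2 * τ * wrho x0 γ x) ≤
            C * ∫ x in Ω,
              (∑ i, a i x * pdx v i x + a0 x * v x) ^ 2 * Real.exp (2 * τ * wrho x0 γ x) :=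
  firstorder_carleman_general Ω x0 γ M c0 a a0 hΩopen hΩbd hγ ha0cont hacont ha0M haM hc0 hnc

end
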